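/- arXiv:2305.16783 — 2 statements merged into one kernel-verified Lean document; each statement's English description precedes it below -/
import Mathlib

section
/- Let X and Y be real separable Banach spaces with X reflexive, let A : X → Y' satisfy property (H2) with witness map Φ ∈ B(X,Y), and let b ∈ Y'. Then every sequence (x_n) in X satisfying ⟨A(x_n), Φ(x_n)⟩ = ⟨b, Φ(x_n)⟩ for all n (in particular, every sequence of discrete solutions x_n ∈ X_n of the finite-dimensional problems tested against Y_n := Φ(X_n)) is bounded in X. -/
open Filter Topology

noncomputable section

/-- The filter of elements of a normed space whose norm tends to infinity. -/
def normAtTop (X : Type*) [Norm X] : Filter X :=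
  Filter.comap (fun x => ‖x‖) Filter.atTop

/-- `N(Φ) := limsup_{‖x‖ → ∞} ‖Φ x‖ / ‖x‖ ∈ [0, +∞]`. -/
def Nval {X Y : Type*} [Norm X] [Norm Y] (Φ : X → Y) : EReal :=
  Filter.limsup (fun x => ((‖Φ x‖ / ‖x‖ : ℝ) : EReal)) (normAtTop X)

/-- `Φ ∈ B(X, Y)`: continuous, surjective, and `N(Φ) < ∞`. -/
def MemB {X Y : Type*} [NormedAddCommGroup X] [NormedAddCommGroup Y]
    (Φ : X → Y) : Prop :=
  Continuous Φ ∧ Function.Surjective Φ ∧ Nval Φ < ⊤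

/-- Property (H1): weak convergence `xₙ ⇀ x` in `X` implies `A xₙ ⇀* A x` in `Y'`
and boundedness of the images. -/
def PropH1 {X Y : Type*} [NormedAddCommGroup X] [NormedSpace ℝ X]
    [NormedAddCommGroup Y] [NormedSpace ℝ Y]
    (A : X → StrongDual ℝ Y) : Prop :=
  ∀ (u : ℕ → X) (x : X),
    (∀ f : StrongDual ℝ X, Tendsto (fun n => f (u n)) atTop (𝓝 (f x))) →
      (∀ y : Y, Tendsto (fun n => A (u n) y) atTop (𝓝 (A x y))) ∧
        ∃ C : ℝ, ∀ n, ‖A (u n)‖ ≤ C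

/-- Property (H2) with witness `Φ`: mapped coercivity,
`liminf_{‖x‖ → ∞} ⟨A x, Φ x⟩ / ‖x‖ = +∞`. -/
def PropH2 {X Y : Type*} [NormedAddCommGroup X] [NormedSpace ℝ X]
    [NormedAddCommGroup Y] [NormedSpace ℝ Y]
    (A : X → StrongDual ℝ Y) (Φ : X → Y) : Prop :=
  Filter.liminf (fun x => ((A x (Φ x) / ‖x‖ : ℝ) : EReal)) (normAtTop X) = ⊤

/-!
Since `N(Φ) < ∞` there is `M` with `‖Φ x‖ ≤ M ‖x‖` for large `‖x‖`, so `⟨b, Φ x⟩ ≤ ‖b‖ M ‖x‖`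
there; by (H2), `⟨A x, Φ x⟩ > ‖b‖ M ‖x‖` for large `‖x‖`. Hence the equation
`⟨A x, Φ x⟩ = ⟨b, Φ x⟩` can only hold on a bounded set.
-/

section NormAtTop

variable {X Y : Type*} [Norm X]

theorem eventually_norm_pos_normAtTop : ∀ᶠ z in normAtTop X, 0 < ‖z‖ :=
  tendsto_comap.eventually_gt_atTop 0

theorem exists_norm_le_of_eventually_not {P : X → Prop} (h : ∀ᶠ z in normAtTop X, ¬P z) :
    ∃ C : ℝ, ∀ z, P z → ‖z‖ ≤ C := by
  obtain ⟨R, hR⟩ := eventually_atTop.mp (eventually_comap.mp h)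
  exact ⟨R, fun z hz => not_lt.mp fun hzR => hR ‖z‖ hzR.le z rfl hz⟩

theorem exists_eventually_norm_le_mul_of_Nval_lt_top [Norm Y] {Φ : X → Y} (hΦ : Nval Φ < ⊤) :
    ∃ M : ℝ, ∀ᶠ z in normAtTop X, ‖Φ z‖ ≤ M * ‖z‖ := by
  obtain ⟨M, hM, -⟩ := EReal.lt_iff_exists_real_btwn.mp hΦ
  refine ⟨M, ?_⟩
  filter_upwards [eventually_lt_of_limsup_lt hM, eventually_norm_pos_normAtTop] with z hz hpos
  exact ((div_lt_iff₀ hpos).mp (EReal.coe_lt_coe_iff.mp hz)).le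

end NormAtTop

theorem PropH2.eventually_mul_norm_lt {X Y : Type*} [NormedAddCommGroup X] [NormedSpace ℝ X]
    [NormedAddCommGroup Y] [NormedSpace ℝ Y] {A : X → StrongDual ℝ Y} {Φ : X → Y}
    (hH2 : PropH2 A Φ) (c : ℝ) : ∀ᶠ z in normAtTop X, c * ‖z‖ < A z (Φ z) := by
  have hc : (c : EReal) < liminf (fun z => ((A z (Φ z) / ‖z‖ : ℝ) : EReal)) (normAtTop X) :=
    (EReal.coe_lt_top c).trans_eq hH2.symm
  filter_upwards [eventually_lt_of_lt_liminf hc, eventually_norm_pos_normAtTop] with z hz hpos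
  exact (lt_div_iff₀ hpos).mp (EReal.coe_lt_coe_iff.mp hz)

theorem statement3_general
    {X Y : Type*} [NormedAddCommGroup X] [NormedSpace ℝ X]
    [NormedAddCommGroup Y] [NormedSpace ℝ Y]
    (A : X → StrongDual ℝ Y) (Φ : X → Y)
    (hΦ : MemB Φ) (hH2 : PropH2 A Φ)
    (b : StrongDual ℝ Y)
    (x : ℕ → X) (hx : ∀ n, A (x n) (Φ (x n)) = b (Φ (x n))) :
    ∃ C : ℝ, ∀ n, ‖x n‖ ≤ C := by
  obtain ⟨M, hM⟩ := exists_eventually_norm_le_mul_of_Nval_lt_top hΦ.2.2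
  have hgrowth : ∀ᶠ z in normAtTop X, b (Φ z) < A z (Φ z) := by
    filter_upwards [hM, hH2.eventually_mul_norm_lt (‖b‖ * M)] with z hΦz hAz
    calc b (Φ z) ≤ ‖b‖ * ‖Φ z‖ := (le_abs_self _).trans (b.le_opNorm (Φ z))
      _ ≤ ‖b‖ * (M * ‖z‖) := mul_le_mul_of_nonneg_left hΦz (norm_nonneg b)
      _ = ‖b‖ * M * ‖z‖ := (mul_assoc _ _ _).symm
      _ < A z (Φ z) := hAz
  obtain ⟨C, hC⟩ := exists_norm_le_of_eventually_not (hgrowth.mono fun z h => h.ne')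
  exact ⟨C, fun n => hC (x n) (hx n)⟩

/-- Under (H2) with witness `Φ ∈ B(X,Y)`, every sequence `(xₙ)` with
`⟨A xₙ, Φ xₙ⟩ = ⟨b, Φ xₙ⟩` for all `n` is bounded in `X`. -/
theorem statement3
    {X Y : Type*} [NormedAddCommGroup X] [NormedSpace ℝ X] [CompleteSpace X]
    [TopologicalSpace.SeparableSpace X]
    [NormedAddCommGroup Y] [NormedSpace ℝ Y] [CompleteSpace Y]
    [TopologicalSpace.SeparableSpace Y]
    (hrefl : Function.Surjective (NormedSpace.inclusionInDoubleDual ℝ X))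
    (A : X → StrongDual ℝ Y) (Φ : X → Y)
    (hΦ : MemB Φ) (hH2 : PropH2 A Φ)
    (b : StrongDual ℝ Y)
    (x : ℕ → X) (hx : ∀ n, A (x n) (Φ (x n)) = b (Φ (x n))) :
    ∃ C : ℝ, ∀ n, ‖x n‖ ≤ C :=
  statement3_general A Φ hΦ hH2 b x hx
end
end

section
/- Let X and Y be real separable Banach spaces, X reflexive, and let A : X → Y' be a bounded linear operator. Suppose there exists a bounded linear surjective map Φ : X → Y with liminf_{‖x‖_X → ∞} ⟨Ax, Φx⟩/‖x‖_X = +∞ (property (H2) with linear Φ). Then A is injective and Φ is injective. -/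
/-!
Both maps are linear, so `q x = ⟨A x, Φ x⟩` is a quadratic form and `q (t • x) / ‖t • x‖ = t * q x / ‖x‖`
for `t > 0`. Coercivity makes this ratio positive for `t` large, so `q x > 0` whenever `x ≠ 0`;
in particular neither `A x` nor `Φ x` can vanish.
-/

open Filter Topology

noncomputable section

theorem Filter.eventually_gt_of_liminf_coe_eq_top {α : Type*} {l : Filter α} {f : α → ℝ}
    (h : liminf (fun x => (f x : EReal)) l = ⊤) (c : ℝ) : ∀ᶠ x in l, c < f x := by
  have hc : (c : EReal) < liminf (fun x => (f x : EReal)) l := h ▸ EReal.coe_lt_top c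
  filter_upwards [eventually_lt_of_lt_liminf hc] with x hx
  exact EReal.coe_lt_coe_iff.mp hx

theorem tendsto_smul_atTop_normAtTop {X : Type*} [NormedAddCommGroup X] [NormedSpace ℝ X]
    {x : X} (hx : x ≠ 0) : Tendsto (fun t : ℝ => t • x) atTop (normAtTop X) := by
  refine tendsto_comap_iff.mpr ?_
  simp only [Function.comp_def, norm_smul]
  exact tendsto_norm_atTop_atTop.atTop_mul_const (norm_pos_iff.mpr hx)

theorem pairing_pos_of_liminf_eq_top {X Y : Type*} [NormedAddCommGroup X] [NormedSpace ℝ X]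
    [NormedAddCommGroup Y] [NormedSpace ℝ Y] {A : X →L[ℝ] StrongDual ℝ Y} {Φ : X →L[ℝ] Y}
    (hH2 : liminf (fun x => ((A x (Φ x) / ‖x‖ : ℝ) : EReal)) (normAtTop X) = ⊤)
    {x : X} (hx : x ≠ 0) : 0 < A x (Φ x) := by
  have hpos : ∀ᶠ t : ℝ in atTop, 0 < t ∧ 0 < A (t • x) (Φ (t • x)) / ‖t • x‖ :=
    (eventually_gt_atTop 0).and
      ((tendsto_smul_atTop_normAtTop hx).eventually (eventually_gt_of_liminf_coe_eq_top hH2 0))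
  obtain ⟨t, ht, hq⟩ := hpos.exists
  have hscale : A (t • x) (Φ (t • x)) / ‖t • x‖ = t * (A x (Φ x) / ‖x‖) := by
    have hx' : ‖x‖ ≠ 0 := norm_ne_zero_iff.mpr hx
    simp only [map_smul, smul_apply, smul_eq_mul, norm_smul,
      Real.norm_of_nonneg ht.le]
    field_simp
  rw [hscale] at hq
  exact (div_pos_iff_of_pos_right (norm_pos_iff.mpr hx)).mp (pos_of_mul_pos_right hq ht.le)

theorem statement13_general
    {X Y : Type*} [NormedAddCommGroup X] [NormedSpace ℝ X]
    [NormedAddCommGroup Y] [NormedSpace ℝ Y]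
    (A : X →L[ℝ] StrongDual ℝ Y) (Φ : X →L[ℝ] Y)
    (hH2 : Filter.liminf (fun x => ((A x (Φ x) / ‖x‖ : ℝ) : EReal)) (normAtTop X) = ⊤) :
    Function.Injective A ∧ Function.Injective Φ := by
  have hq : ∀ x, x ≠ 0 → A x (Φ x) ≠ 0 := fun x hx =>
    (pairing_pos_of_liminf_eq_top hH2 hx).ne'
  constructor
  · refine (injective_iff_map_eq_zero A).mpr fun x hAx => ?_
    by_contra hx
    exact hq x hx (by rw [hAx, zero_apply])
  · refine (injective_iff_map_eq_zero Φ).mpr fun x hΦx => ?_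
    by_contra hx
    exact hq x hx (by rw [hΦx, map_zero])

/-- If a bounded linear operator `A : X → Y'` satisfies (H2) with a bounded linear
surjective `Φ : X → Y`, then both `A` and `Φ` are injective. -/
theorem statement13
    {X Y : Type*} [NormedAddCommGroup X] [NormedSpace ℝ X] [CompleteSpace X]
    [TopologicalSpace.SeparableSpace X]
    [NormedAddCommGroup Y] [NormedSpace ℝ Y] [CompleteSpace Y]
    [TopologicalSpace.SeparableSpace Y]
    (hrefl : Function.Surjective (NormedSpace.inclusionInDoubleDual ℝ X))
    (A : X →L[ℝ] StrongDual ℝ Y) (Φ : X →L[ℝ] Y)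
    (hsurj : Function.Surjective Φ)
    (hH2 : Filter.liminf (fun x => ((A x (Φ x) / ‖x‖ : ℝ) : EReal)) (normAtTop X) = ⊤) :
    Function.Injective A ∧ Function.Injective Φ :=
  statement13_general A Φ hH2
end
end
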